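/- arXiv:2009.04865 — 3 statements merged into one kernel-verified Lean document; each statement's English description precedes it below -/
import Mathlib

section
/- The function h' solves the exterior constant mean curvature equation: for every r > 2M, h''(r) + (f(r)⁻¹ − h'(r)²·f(r))·(2f(r)/r + f'(r)/2)·h'(r) + (f'(r)/f(r))·h'(r) − 3Ĥ·(f(r)⁻¹ − h'(r)²·f(r))^(3/2) = 0, where h'' denotes the derivative of h' and f'(r) = 2M/r² is the derivative of f. -/
open Real Filter Topology Set

/-- Schwarzschild lapse-type function `f(r) = 1 - 2M/r`. -/
noncomputable def f (M r : ℝ) : ℝ := 1 - 2 * M / r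

/-- `P(r) = Ĥ·r + c₁/r²`. -/
noncomputable def P (H c1 r : ℝ) : ℝ := H * r + c1 / r ^ 2

/-- Slope of the height function of the exterior CMC slice:
`h'(r) = P(r)/(f(r)·√(f(r) + P(r)²))`. -/
noncomputable def h' (M H c1 r : ℝ) : ℝ :=
  P H c1 r / (f M r * Real.sqrt (f M r + (P H c1 r) ^ 2))

/-!
Write `X = F⁻¹ - h'² F`. For any lapse `F` and any `P`, the slope `h' = P / (F √(F + P²))` has
`X = (F + P²)⁻¹`, and differentiating `h'` directly gives
`h'' + X (2F/r + F'/2) h' + (F'/F) h' = X^{3/2} (P' + 2P/r) = X^{3/2} (r² P)' / r²`.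
For `P = Ĥ r + c₁ / r²` we have `r² P = Ĥ r³ + c₁`, so the last factor is the constant `3Ĥ`.
-/

noncomputable def cmcSlope (F Q : ℝ → ℝ) (r : ℝ) : ℝ :=
  Q r / (F r * √(F r + Q r ^ 2))

lemma rpow_three_halves_inv {a : ℝ} (ha : 0 ≤ a) :
    a⁻¹ ^ ((3 : ℝ) / 2) = (a * √a)⁻¹ := by
  rw [Real.inv_rpow ha, Real.sqrt_eq_rpow, ← Real.rpow_one_add' ha (by norm_num)]
  norm_num

section cmcSlope

variable {F Q : ℝ → ℝ} {F' Q' r : ℝ}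

lemma inv_sub_cmcSlope_sq_mul (hFpos : 0 < F r) :
    (F r)⁻¹ - cmcSlope F Q r ^ 2 * F r = (F r + Q r ^ 2)⁻¹ := by
  have hs : √(F r + Q r ^ 2) ^ 2 = F r + Q r ^ 2 := Real.sq_sqrt (by positivity)
  have hs0 : 0 < √(F r + Q r ^ 2) := Real.sqrt_pos.mpr (by positivity)
  unfold cmcSlope
  field_simp
  rw [hs]
  ring

theorem cmcSlope_cmc_equation (hF : HasDerivAt F F' r) (hQ : HasDerivAt Q Q' r)
    (hr : r ≠ 0) (hFpos : 0 < F r) :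
    ∃ h'' : ℝ, HasDerivAt (cmcSlope F Q) h'' r ∧
      h'' + ((F r)⁻¹ - cmcSlope F Q r ^ 2 * F r) * (2 * F r / r + F' / 2) * cmcSlope F Q r
        + (F' / F r) * cmcSlope F Q r
        = ((F r)⁻¹ - cmcSlope F Q r ^ 2 * F r) ^ ((3 : ℝ) / 2) * (Q' + 2 * Q r / r) := by
  set s := √(F r + Q r ^ 2) with hs_def
  have hpos : 0 < F r + Q r ^ 2 := by positivity
  have hs0 : 0 < s := Real.sqrt_pos.mpr hpos
  have hs : s ^ 2 = F r + Q r ^ 2 := Real.sq_sqrt hpos.le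
  have hsD : HasDerivAt (fun x => √(F x + Q x ^ 2)) ((F' + 2 * Q r * Q') / (2 * s)) r := by
    simpa using (hF.add (hQ.pow 2)).sqrt hpos.ne'
  refine ⟨_, hQ.div (hF.mul hsD) (by positivity), ?_⟩
  rw [inv_sub_cmcSlope_sq_mul hFpos, ← hs, rpow_three_halves_inv (by positivity),
    Real.sqrt_sq hs0.le]
  unfold cmcSlope
  rw [← hs_def]
  field_simp
  linear_combination 2 * Q' * F r * r * hs

end cmcSlope

lemma f_pos {M r : ℝ} (hM : 0 < M) (hr : 2 * M < r) : 0 < f M r := by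
  have hr0 : 0 < r := by linarith
  rw [f, sub_pos, div_lt_one hr0]
  exact hr

lemma hasDerivAt_f (M : ℝ) {r : ℝ} (hr : r ≠ 0) : HasDerivAt (f M) (2 * M / r ^ 2) r := by
  have h := ((hasDerivAt_inv hr).const_mul (2 * M)).const_sub 1
  refine (h.congr_deriv (by ring)).congr_of_eventuallyEq (.of_forall fun x => ?_)
  simp only [f, div_eq_mul_inv]

lemma hasDerivAt_P (H c1 : ℝ) {r : ℝ} (hr : r ≠ 0) :
    HasDerivAt (P H c1) (H - 2 * c1 / r ^ 3) r := by
  have h := ((hasDerivAt_id' r).const_mul H).add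
    (((hasDerivAt_pow 2 r).inv (pow_ne_zero 2 hr)).const_mul c1)
  refine (h.congr_deriv ?_).congr_of_eventuallyEq (.of_forall fun x => ?_)
  · field_simp
    ring
  · simp [P, div_eq_mul_inv]

lemma deriv_P_add_two_mul_P_div (H c1 : ℝ) {r : ℝ} (hr : r ≠ 0) :
    H - 2 * c1 / r ^ 3 + 2 * P H c1 r / r = 3 * H := by
  unfold P
  field_simp
  ring

/-- The function `h'` solves the exterior constant mean curvature equation: for every
`r > 2M` there is a derivative `h''(r)` of `h'` at `r` such that
`h'' + (f⁻¹ − h'²f)(2f/r + f'/2)h' + (f'/f)h' − 3Ĥ(f⁻¹ − h'²f)^{3/2} = 0`,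
where `f'(r) = 2M/r²`. -/
theorem exterior_cmc_equation (M H c1 : ℝ) (hM : 0 < M) :
    ∀ r : ℝ, 2 * M < r → ∃ h'' : ℝ, HasDerivAt (h' M H c1) h'' r ∧
      h'' + ((f M r)⁻¹ - (h' M H c1 r) ^ 2 * f M r) *
          (2 * f M r / r + (2 * M / r ^ 2) / 2) * h' M H c1 r
        + ((2 * M / r ^ 2) / f M r) * h' M H c1 r
        - 3 * H * ((f M r)⁻¹ - (h' M H c1 r) ^ 2 * f M r) ^ ((3 : ℝ) / 2) = 0 := by
  intro r hr
  have hr0 : r ≠ 0 := by linarith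
  have hslope : h' M H c1 = cmcSlope (f M) (P H c1) := rfl
  rw [hslope]
  obtain ⟨h'', hderiv, hcmc⟩ := cmcSlope_cmc_equation (hasDerivAt_f M hr0)
    (hasDerivAt_P H c1 hr0) hr0 (f_pos hM hr)
  rw [deriv_P_add_two_mul_P_div H c1 hr0] at hcmc
  exact ⟨h'', hderiv, by linear_combination hcmc⟩
end

section
/- If Ĥ ≠ 0, then lim_{r→∞} h'(r) = 1 when Ĥ > 0 and lim_{r→∞} h'(r) = −1 when Ĥ < 0; moreover lim_{r→∞} (f(r)⁻¹ − f(r)·h'(r)²) = 0, i.e. the norm of the normal ḡ^{μν}∂_μ t̂ ∂_ν t̂ = −(f⁻¹ − f h'²) tends to 0 and the CMC slice becomes asymptotically null as r → ∞. -/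
open Real Filter Topology Set

/-!
Since `f(r) → 1` while `P(r) → ±∞` with the sign of `Ĥ`, writing
`h' = (P / √(f + P²)) / f` shows `h' → sign Ĥ`, and the identity
`f⁻¹ - f h'² = (f + P²)⁻¹` shows that the norm of the normal tends to `0`.
-/

section DivSqrt

variable {α : Type*} {l : Filter α} {u g : α → ℝ} {a : ℝ}

theorem tendsto_div_sqrt_add_sq_of_tendsto_atTop (hu : Tendsto u l atTop)
    (hg : Tendsto g l (𝓝 a)) : Tendsto (fun x => u x / √(g x + u x ^ 2)) l (𝓝 1) := by
  have hden : Tendsto (fun x => g x + u x ^ 2) l atTop :=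
    hg.add_atTop ((tendsto_pow_atTop two_ne_zero).comp hu)
  have hratio : Tendsto (fun x => 1 - g x / (g x + u x ^ 2)) l (𝓝 1) := by
    simpa using tendsto_const_nhds.sub (hg.div_atTop hden)
  have heq : ∀ᶠ x in l, √(1 - g x / (g x + u x ^ 2)) = u x / √(g x + u x ^ 2) := by
    filter_upwards [hu.eventually_gt_atTop 0, hden.eventually_gt_atTop 0] with x hux hdx
    rw [one_sub_div hdx.ne', add_sub_cancel_left, sqrt_div (sq_nonneg _), sqrt_sq hux.le]
  simpa using ((continuous_sqrt.tendsto 1).comp hratio).congr' heq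

theorem tendsto_div_sqrt_add_sq_of_tendsto_atBot (hu : Tendsto u l atBot)
    (hg : Tendsto g l (𝓝 a)) : Tendsto (fun x => u x / √(g x + u x ^ 2)) l (𝓝 (-1)) := by
  simpa [neg_div] using
    (tendsto_div_sqrt_add_sq_of_tendsto_atTop (tendsto_neg_atBot_atTop.comp hu) hg).neg

end DivSqrt

theorem tendsto_f (M : ℝ) : Tendsto (f M) atTop (𝓝 1) := by
  have h := tendsto_const_nhds (x := (1 : ℝ)) |>.sub <|
    (tendsto_const_nhds (x := 2 * M)).div_atTop tendsto_id
  rw [sub_zero] at h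
  exact h

theorem tendsto_P_atTop {H : ℝ} (c1 : ℝ) (hH : 0 < H) : Tendsto (P H c1) atTop atTop :=
  (tendsto_id.const_mul_atTop hH).atTop_add
    (tendsto_const_nhds.div_atTop (tendsto_pow_atTop two_ne_zero))

theorem tendsto_P_atBot {H : ℝ} (c1 : ℝ) (hH : H < 0) : Tendsto (P H c1) atTop atBot :=
  (tendsto_id.const_mul_atTop_of_neg hH).atBot_add
    (tendsto_const_nhds.div_atTop (tendsto_pow_atTop two_ne_zero))

theorem tendsto_P_sq {H : ℝ} (c1 : ℝ) (hH : H ≠ 0) :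
    Tendsto (fun r => P H c1 r ^ 2) atTop atTop := by
  have habs : Tendsto (fun r => |P H c1 r|) atTop atTop := by
    rcases hH.lt_or_gt with hneg | hpos
    · exact tendsto_abs_atBot_atTop.comp (tendsto_P_atBot c1 hneg)
    · exact tendsto_abs_atTop_atTop.comp (tendsto_P_atTop c1 hpos)
  simpa only [Function.comp_def, sq_abs] using (tendsto_pow_atTop two_ne_zero).comp habs

theorem h'_eq_div (M H c1 : ℝ) :
    h' M H c1 = fun r => P H c1 r / √(f M r + P H c1 r ^ 2) / f M r := by
  ext r
  exact div_mul_eq_div_div_swap _ _ _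

theorem inv_f_sub_f_mul_h'_sq {M H c1 r : ℝ} (hf : 0 < f M r) :
    (f M r)⁻¹ - f M r * h' M H c1 r ^ 2 = (f M r + P H c1 r ^ 2)⁻¹ := by
  have hsum : 0 < f M r + P H c1 r ^ 2 := by positivity
  rw [h', div_pow, mul_pow, sq_sqrt hsum.le]
  field_simp
  ring

theorem exterior_cmc_asymptotically_null_general (M H c1 : ℝ) (hH : H ≠ 0) :
    (0 < H → Tendsto (h' M H c1) atTop (𝓝 1)) ∧
    (H < 0 → Tendsto (h' M H c1) atTop (𝓝 (-1))) ∧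
    Tendsto (fun r => (f M r)⁻¹ - f M r * (h' M H c1 r) ^ 2) atTop (𝓝 0) := by
  have hf := tendsto_f M
  refine ⟨fun hpos => ?_, fun hneg => ?_, ?_⟩
  · rw [h'_eq_div]
    simpa only [Pi.div_def, div_one] using
      (tendsto_div_sqrt_add_sq_of_tendsto_atTop (tendsto_P_atTop c1 hpos) hf).div hf one_ne_zero
  · rw [h'_eq_div]
    simpa only [Pi.div_def, div_one] using
      (tendsto_div_sqrt_add_sq_of_tendsto_atBot (tendsto_P_atBot c1 hneg) hf).div hf one_ne_zero
  · refine ((hf.add_atTop (tendsto_P_sq c1 hH)).inv_tendsto_atTop).congr' ?_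
    filter_upwards [hf.eventually (eventually_gt_nhds one_pos)] with r hr
    exact (inv_f_sub_f_mul_h'_sq hr).symm

/-- If `Ĥ ≠ 0`, then `h'(r) → 1` as `r → ∞` when `Ĥ > 0`, `h'(r) → −1` when `Ĥ < 0`,
and `f(r)⁻¹ − f(r)h'(r)² → 0`: the norm of the normal tends to `0` and the CMC slice
becomes asymptotically null as `r → ∞`. -/
theorem exterior_cmc_asymptotically_null (M H c1 : ℝ) (hM : 0 < M) (hH : H ≠ 0) :
    (0 < H → Tendsto (h' M H c1) atTop (𝓝 1)) ∧
    (H < 0 → Tendsto (h' M H c1) atTop (𝓝 (-1))) ∧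
    Tendsto (fun r => (f M r)⁻¹ - f M r * (h' M H c1 r) ^ 2) atTop (𝓝 0) :=
  exterior_cmc_asymptotically_null_general M H c1 hH
end

section
/- If c₁ = −8M³Ĥ, then for every r > 2M the CMC slope satisfies h'(r) = Ĥ·√(r/(r − 2M))·√( r·(r² + 2Mr + 4M²)² / ( r³ + Ĥ²·(r − 2M)·(r² + 2Mr + 4M²)² ) ); in particular the function r ↦ √(r − 2M)·h'(r) stays bounded as r → 2M⁺, i.e. h'(r) = O((r − 2M)^(−1/2)) near the event horizon. -/
open Real Filter Topology Set

/-!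
For `c₁ = −8M³Ĥ` one has `r²P(r) = Ĥ(r³ − 8M³) = Ĥ(r − 2M)(r² + 2Mr + 4M²)`, so `P` vanishes at
the horizon to first order, like `f`, and
`f + P² = (r − 2M)(r³ + Ĥ²(r − 2M)(r² + 2Mr + 4M²)²)/r⁴`. In `h' = P/(f√(f + P²))` the factors
`r − 2M` of `P` and `f` cancel, leaving `√(r − 2M)` in the denominator; `√(r − 2M)·h'(r)` is
therefore continuous at `r = 2M`, where the second factor of `f + P²` equals `8M³ > 0`.
-/

section SlopeFormula

variable {M H r : ℝ}

lemma f_eq_div (M : ℝ) (hr : r ≠ 0) : f M r = (r - 2 * M) / r := by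
  unfold f
  field_simp

lemma P_neg_eight_mul_cube (hr : r ≠ 0) :
    P H (-8 * M ^ 3 * H) r = H * (r - 2 * M) * (r ^ 2 + 2 * M * r + 4 * M ^ 2) / r ^ 2 := by
  unfold P
  field_simp
  ring

lemma f_add_P_neg_eight_mul_cube_sq (hr : r ≠ 0) :
    f M r + P H (-8 * M ^ 3 * H) r ^ 2 =
      (r - 2 * M) * (r ^ 3 + H ^ 2 * (r - 2 * M) * (r ^ 2 + 2 * M * r + 4 * M ^ 2) ^ 2) / r ^ 4 := by
  rw [f_eq_div M hr, P_neg_eight_mul_cube hr]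
  field_simp

lemma h'_neg_eight_mul_cube (hr : 2 * M < r) (hM : 0 ≤ M) :
    h' M H (-8 * M ^ 3 * H) r = H * Real.sqrt (r / (r - 2 * M)) *
      Real.sqrt (r * (r ^ 2 + 2 * M * r + 4 * M ^ 2) ^ 2 /
        (r ^ 3 + H ^ 2 * (r - 2 * M) * (r ^ 2 + 2 * M * r + 4 * M ^ 2) ^ 2)) := by
  have hr0 : 0 < r := by linarith
  have hs : 0 < r - 2 * M := by linarith
  set A := r ^ 2 + 2 * M * r + 4 * M ^ 2
  set D := r ^ 3 + H ^ 2 * (r - 2 * M) * A ^ 2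
  have hA : 0 < A := by positivity
  have hD : 0 < D := by positivity
  have sqrt_f_add_P_sq : Real.sqrt ((r - 2 * M) * D / r ^ 4) =
      Real.sqrt (r - 2 * M) * Real.sqrt D / r ^ 2 := by
    rw [Real.sqrt_div' _ (by positivity), Real.sqrt_mul hs.le,
      show r ^ 4 = (r ^ 2) ^ 2 by ring, Real.sqrt_sq (by positivity)]
  have sqrt_rA_sq_div : Real.sqrt (r * A ^ 2 / D) = Real.sqrt r * A / Real.sqrt D := by
    rw [Real.sqrt_div' _ hD.le, Real.sqrt_mul hr0.le, Real.sqrt_sq hA.le]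
  unfold h'
  rw [f_add_P_neg_eight_mul_cube_sq hr0.ne', sqrt_f_add_P_sq, f_eq_div M hr0.ne',
    P_neg_eight_mul_cube hr0.ne', Real.sqrt_div' _ hs.le, sqrt_rA_sq_div]
  have hs' : Real.sqrt (r - 2 * M) ≠ 0 := by positivity
  have hD' : Real.sqrt D ≠ 0 := by positivity
  field_simp
  rw [Real.sq_sqrt hr0.le]
  ring

lemma sqrt_sub_mul_h'_neg_eight_mul_cube (hr : 2 * M < r) (hM : 0 ≤ M) :
    Real.sqrt (r - 2 * M) * h' M H (-8 * M ^ 3 * H) r = H * Real.sqrt r *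
      Real.sqrt (r * (r ^ 2 + 2 * M * r + 4 * M ^ 2) ^ 2 /
        (r ^ 3 + H ^ 2 * (r - 2 * M) * (r ^ 2 + 2 * M * r + 4 * M ^ 2) ^ 2)) := by
  have hs : 0 < r - 2 * M := by linarith
  rw [h'_neg_eight_mul_cube hr hM, ← mul_assoc, mul_left_comm, ← Real.sqrt_mul hs.le,
    mul_div_cancel₀ _ hs.ne']

end SlopeFormula

lemma continuousAt_horizon_regular_part {M : ℝ} (H : ℝ) (hM : 0 < M) :
    ContinuousAt (fun r => H * Real.sqrt r *
      Real.sqrt (r * (r ^ 2 + 2 * M * r + 4 * M ^ 2) ^ 2 /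
        (r ^ 3 + H ^ 2 * (r - 2 * M) * (r ^ 2 + 2 * M * r + 4 * M ^ 2) ^ 2))) (2 * M) := by
  have hD : (2 * M) ^ 3 + H ^ 2 * (2 * M - 2 * M) *
      ((2 * M) ^ 2 + 2 * M * (2 * M) + 4 * M ^ 2) ^ 2 ≠ 0 := by
    ring_nf
    positivity
  exact (continuousAt_const.mul Real.continuous_sqrt.continuousAt).mul
    (Real.continuous_sqrt.continuousAt.comp (ContinuousAt.div (by fun_prop) (by fun_prop) hD))

/-- If `c₁ = −8M³Ĥ`, then for every `r > 2M`,
`h'(r) = Ĥ·√(r/(r − 2M))·√(r(r² + 2Mr + 4M²)²/(r³ + Ĥ²(r − 2M)(r² + 2Mr + 4M²)²))`;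
in particular `√(r − 2M)·h'(r)` stays bounded as `r → 2M⁺`, i.e.
`h'(r) = O((r − 2M)^(−1/2))` near the event horizon. -/
theorem exterior_cmc_horizon_behaviour (M H c1 : ℝ) (hM : 0 < M)
    (hc : c1 = -8 * M ^ 3 * H) :
    (∀ r : ℝ, 2 * M < r →
      h' M H c1 r = H * Real.sqrt (r / (r - 2 * M)) *
        Real.sqrt (r * (r ^ 2 + 2 * M * r + 4 * M ^ 2) ^ 2 /
          (r ^ 3 + H ^ 2 * (r - 2 * M) * (r ^ 2 + 2 * M * r + 4 * M ^ 2) ^ 2))) ∧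
    ∃ C : ℝ, ∀ᶠ r in 𝓝[>] (2 * M), |Real.sqrt (r - 2 * M) * h' M H c1 r| ≤ C := by
  subst hc
  refine ⟨fun r hr => h'_neg_eight_mul_cube hr hM.le, ?_⟩
  obtain ⟨C, hC⟩ := (continuousAt_horizon_regular_part H hM).abs.isBoundedUnder_le
  refine ⟨C, ?_⟩
  filter_upwards [nhdsWithin_le_nhds (eventually_map.mp hC), self_mem_nhdsWithin] with r hCr hr
  rwa [sqrt_sub_mul_h'_neg_eight_mul_cube hr hM.le]
end
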